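/- The principal pivot transform is an involution: if A is a square matrix over a field and A[T] is invertible, then (A*T)[T] is invertible and (A*T)*T = A. -/

import Mathlib

/-!
Reindexing `V` as `T ⊕ Tᶜ` turns the principal pivot transform into the block map
`(P Q; R S) ↦ (P⁻¹, -P⁻¹Q; RP⁻¹, S - RP⁻¹Q)`, whose new pivot block `P⁻¹` is again invertible.
Applying the map twice, `P⁻¹⁻¹ = P` and the correction terms cancel:
`S - RP⁻¹Q - (RP⁻¹)P(-P⁻¹Q) = S`.
-/

open Matrix

/-- The principal pivot transform `A * T` of a square matrix `A` on the set
`T = {i | p i}` of indices: writing `A` in block form `(P Q; R S)` with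
`P = A[T]`, the principal pivot transform is
`(P⁻¹, -P⁻¹Q; RP⁻¹, S - RP⁻¹Q)`. -/
noncomputable def ppt {V : Type*} [Fintype V] [DecidableEq V] {F : Type*} [Field F]
    (A : Matrix V V F) (p : V → Prop) [DecidablePred p] : Matrix V V F :=
  let P := A.submatrix (fun i : {x // p x} => (i : V)) (fun i : {x // p x} => (i : V))
  let Q := A.submatrix (fun i : {x // p x} => (i : V)) (fun i : {x // ¬ p x} => (i : V))
  let R := A.submatrix (fun i : {x // ¬ p x} => (i : V)) (fun i : {x // p x} => (i : V))
  let S := A.submatrix (fun i : {x // ¬ p x} => (i : V)) (fun i : {x // ¬ p x} => (i : V))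
  (Matrix.fromBlocks P⁻¹ (-(P⁻¹ * Q)) (R * P⁻¹) (S - R * P⁻¹ * Q)).submatrix
    (Equiv.sumCompl p).symm (Equiv.sumCompl p).symm

namespace Matrix

variable {m n α : Type*} [Fintype m] [DecidableEq m] [CommRing α]

noncomputable def blockPivot (M : Matrix (m ⊕ n) (m ⊕ n) α) : Matrix (m ⊕ n) (m ⊕ n) α :=
  fromBlocks M.toBlocks₁₁⁻¹ (-(M.toBlocks₁₁⁻¹ * M.toBlocks₁₂)) (M.toBlocks₂₁ * M.toBlocks₁₁⁻¹)
    (M.toBlocks₂₂ - M.toBlocks₂₁ * M.toBlocks₁₁⁻¹ * M.toBlocks₁₂)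

@[simp]
theorem toBlocks₁₁_blockPivot (M : Matrix (m ⊕ n) (m ⊕ n) α) :
    (blockPivot M).toBlocks₁₁ = M.toBlocks₁₁⁻¹ :=
  toBlocks_fromBlocks₁₁ ..

theorem blockPivot_fromBlocks (P : Matrix m m α) (Q : Matrix m n α) (R : Matrix n m α)
    (S : Matrix n n α) :
    blockPivot (fromBlocks P Q R S) = fromBlocks P⁻¹ (-(P⁻¹ * Q)) (R * P⁻¹) (S - R * P⁻¹ * Q) :=
  rfl

theorem blockPivot_blockPivot (M : Matrix (m ⊕ n) (m ⊕ n) α) (h : IsUnit M.toBlocks₁₁.det) :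
    blockPivot (blockPivot M) = M := by
  rw [← fromBlocks_toBlocks M] at h ⊢
  set P := M.toBlocks₁₁
  rw [toBlocks_fromBlocks₁₁] at h
  rw [blockPivot_fromBlocks, blockPivot_fromBlocks, nonsing_inv_nonsing_inv P h]
  congr 1
  · simp [← Matrix.mul_assoc, mul_nonsing_inv P h]
  · simp [Matrix.mul_assoc, nonsing_inv_mul P h]
  · simp [Matrix.mul_assoc, nonsing_inv_mul P h]

end Matrix

section ppt

variable {V : Type*} [Fintype V] [DecidableEq V] {F : Type*} [Field F]

theorem reindex_ppt (A : Matrix V V F) (p : V → Prop) [DecidablePred p] :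
    reindex (Equiv.sumCompl p).symm (Equiv.sumCompl p).symm (ppt A p) =
      blockPivot (reindex (Equiv.sumCompl p).symm (Equiv.sumCompl p).symm A) := by
  simp only [ppt, reindex_apply, Equiv.symm_symm, submatrix_submatrix, Equiv.symm_comp_self,
    submatrix_id_id]
  rfl

theorem ppt_submatrix_self (A : Matrix V V F) (p : V → Prop) [DecidablePred p] :
    (ppt A p).submatrix (fun i : {x // p x} => (i : V)) (fun i : {x // p x} => (i : V)) =
      (A.submatrix (fun i : {x // p x} => (i : V)) (fun i : {x // p x} => (i : V)))⁻¹ := by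
  change (reindex (Equiv.sumCompl p).symm (Equiv.sumCompl p).symm (ppt A p)).toBlocks₁₁ = _
  rw [reindex_ppt, toBlocks₁₁_blockPivot]
  rfl

end ppt

/-- The principal pivot transform is an involution: if `A[T]` is invertible,
then `(A*T)[T]` is invertible and `(A*T)*T = A`. -/
theorem ppt_involutive {V : Type*} [Fintype V] [DecidableEq V]
    {F : Type*} [Field F] (A : Matrix V V F) (p : V → Prop) [DecidablePred p]
    (h : IsUnit (A.submatrix (fun i : {x // p x} => (i : V))
      (fun i : {x // p x} => (i : V))).det) :
    IsUnit ((ppt A p).submatrix (fun i : {x // p x} => (i : V))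
      (fun i : {x // p x} => (i : V))).det ∧
    ppt (ppt A p) p = A := by
  refine ⟨ppt_submatrix_self A p ▸ isUnit_nonsing_inv_det _ h, ?_⟩
  apply (reindex (Equiv.sumCompl p).symm (Equiv.sumCompl p).symm).injective
  rw [reindex_ppt, reindex_ppt]
  exact blockPivot_blockPivot _ h
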